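/- (Averaging-time theorem.) Let (W(t))_{t≥0} be i.i.d. random n×n matrices taking finitely many values, each almost surely a set-averaging matrix for some nonempty set, define x(t+1) = W(t)x(t) for a deterministic x(0) ∈ ℝⁿ, and let λ := λ₂(E[W(0)]) with 0 < λ < 1. Then for every ε ∈ (0,1) and every nonzero x(0): if t ≥ 3·log(1/ε) / log(1/λ), then P( ‖x(t) − x_ave·1‖ / ‖x(0)‖ ≥ ε ) ≤ ε. Moreover 3·log(1/ε)/log(1/λ) ≤ 3·log(1/ε)/(1 − λ), so the same conclusion holds whenever t ≥ 3·log(1/ε)/(1 − λ). -/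

import Mathlib

open Matrix

/-- The set-averaging matrix `W_S`: entries `1/|S|` on `S × S`, a diagonal
identity for indices not in `S`, and `0` elsewhere. -/
noncomputable def setAveragingMatrix {n : ℕ} (S : Finset (Fin n)) :
    Matrix (Fin n) (Fin n) ℝ :=
  Matrix.of fun i j =>
    if i ∈ S ∧ j ∈ S then (S.card : ℝ)⁻¹
    else if i = j then 1 else 0

/-- The second largest eigenvalue (counted with multiplicity) of a symmetric real
matrix: sort the `n` eigenvalues in increasing order and take the `(n-2)`-th
(junk value `0` if the matrix is not Hermitian). -/
noncomputable def lambda2 {n : ℕ} (A : Matrix (Fin n) (Fin n) ℝ) : ℝ :=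
  if h : A.IsHermitian then
    ((Finset.univ.val.map h.eigenvalues).sort (· ≤ ·)).getD (n - 2) 0
  else 0

/-- The gossip trajectory: `traj W x0 0 _ = x0` and
`traj W x0 (t+1) σ = W (σ t) *ᵥ traj W x0 t (σ restricted)`, i.e. the solution of
`x(t+1) = W(t) x(t)` driven by the i.i.d. outcomes `σ`. -/
noncomputable def traj {n : ℕ} {Ω : Type*} (W : Ω → Matrix (Fin n) (Fin n) ℝ)
    (x0 : Fin n → ℝ) : (t : ℕ) → (Fin t → Ω) → (Fin n → ℝ)
  | 0, _ => x0
  | t + 1, σ => W (σ (Fin.last t)) *ᵥ traj W x0 t (fun k => σ k.castSucc)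

/-!
A set-averaging matrix is a symmetric projection fixing `1`, so the deviation
`y(t) = x(t) - x_ave • 1` stays orthogonal to `1` and `‖W y‖² = ⟨y, W y⟩`. Averaging over the
next step, `E ‖y(t+1)‖² = E ⟨y(t), E[W] y(t)⟩ ≤ λ E ‖y(t)‖²`: since `1` is an eigenvector of `E[W]`
with eigenvalue `1 > λ = λ₂(E[W])`, it spans the only eigendirection above `λ`, so the quadratic
form of `E[W]` on the orthogonal complement of `1` is at most `λ`. Hence
`E ‖y(t)‖² ≤ λ^t ‖x(0)‖²`, and Chebyshev's inequality with `λ^t ≤ ε³` bounds the tail by `ε`.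
The comparison of the two times is `log (1/λ) ≥ 1 - λ`.
-/

open Finset

section SetAveraging

variable {n : ℕ} (S : Finset (Fin n))

theorem setAveragingMatrix_mulVec (x : Fin n → ℝ) :
    setAveragingMatrix S *ᵥ x = fun i => if i ∈ S then (∑ j ∈ S, x j) / #S else x i := by
  ext i
  by_cases hi : i ∈ S
  · have hrow : ∀ j, setAveragingMatrix S i j = if j ∈ S then (#S : ℝ)⁻¹ else 0 := fun j => by
      by_cases hj : j ∈ S
      · simp [setAveragingMatrix, hi, hj]
      · simp [setAveragingMatrix, hj, ne_of_mem_of_not_mem hi hj]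
    simp [mulVec, dotProduct, hrow, hi, mul_sum, div_eq_inv_mul]
  · simp [mulVec, dotProduct, setAveragingMatrix, hi]

theorem isSymm_setAveragingMatrix : (setAveragingMatrix S).IsSymm :=
  IsSymm.ext fun i j => by simp only [setAveragingMatrix, of_apply, and_comm, eq_comm]

variable {S}

theorem setAveragingMatrix_mulVec_one (hS : S.Nonempty) : setAveragingMatrix S *ᵥ 1 = 1 := by
  ext i
  simp [setAveragingMatrix_mulVec, hS.card_ne_zero]

theorem isIdempotentElem_setAveragingMatrix (hS : S.Nonempty) :
    IsIdempotentElem (setAveragingMatrix S) := by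
  refine ext_of_mulVec_single fun k => ?_
  rw [← mulVec_mulVec]
  ext i
  simp only [setAveragingMatrix_mulVec]
  split_ifs
  · simp [hS.card_ne_zero]
  · rfl

end SetAveraging

theorem OrthonormalBasis.sum_dotProduct_mul_dotProduct {ι : Type*} [Fintype ι]
    (b : OrthonormalBasis ι ℝ (EuclideanSpace ℝ ι)) (x y : ι → ℝ) :
    ∑ i, (x ⬝ᵥ b i) * (b i ⬝ᵥ y) = x ⬝ᵥ y := by
  simpa [EuclideanSpace.inner_eq_star_dotProduct, dotProduct_comm, mul_comm]
    using b.sum_inner_mul_inner (WithLp.toLp 2 x) (WithLp.toLp 2 y)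

theorem List.Pairwise.countP_getD_lt_le_one {l : List ℝ} (hl : l.Pairwise (· ≤ ·)) :
    l.countP (fun a => l.getD (l.length - 2) 0 < a) ≤ 1 := by
  set x := l.getD (l.length - 2) 0
  have hinit : (l.take (l.length - 1)).countP (fun a => x < a) = 0 := by
    rw [List.countP_eq_zero]
    intro a ha
    obtain ⟨k, hk, rfl⟩ := List.mem_iff_getElem.mp ha
    simp only [List.length_take] at hk
    simp only [List.getElem_take, decide_eq_true_eq, not_lt, x]
    rw [List.getD_eq_getElem l 0 (by omega)]
    exact hl.rel_get_of_le (a := ⟨k, by omega⟩) (b := ⟨l.length - 2, by omega⟩)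
      (Fin.mk_le_mk.mpr (by omega))
  calc l.countP (fun a => x < a)
      = (l.take (l.length - 1)).countP (fun a => x < a)
        + (l.drop (l.length - 1)).countP (fun a => x < a) := by
        rw [← List.countP_append, List.take_append_drop]
    _ ≤ (l.drop (l.length - 1)).length := by rw [hinit, zero_add]; exact List.countP_le_length
    _ ≤ 1 := by rw [List.length_drop]; omega

namespace Matrix.IsHermitian

variable {n : ℕ} {A : Matrix (Fin n) (Fin n) ℝ}

theorem card_lambda2_lt_eigenvalues_le_one (hA : A.IsHermitian) :
    #{i | lambda2 A < hA.eigenvalues i} ≤ 1 := by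
  set l := (univ.val.map hA.eigenvalues).sort (· ≤ ·)
  have hlen : l.length = n := by simp [l]
  have hlambda2 : lambda2 A = l.getD (l.length - 2) 0 := by rw [lambda2, dif_pos hA, hlen]
  calc #{i | lambda2 A < hA.eigenvalues i}
      = (univ.val.map hA.eigenvalues).countP (lambda2 A < ·) := by
        rw [Multiset.countP_map, card_def, filter_val]
    _ = l.countP (fun a => l.getD (l.length - 2) 0 < a) := by
        rw [← Multiset.sort_eq (univ.val.map hA.eigenvalues) (· ≤ ·), Multiset.coe_countP,
          hlambda2]
    _ ≤ 1 := (Multiset.pairwise_sort _ _).countP_getD_lt_le_one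

theorem eigenvectorBasis_dotProduct_mulVec (hA : A.IsHermitian) (i : Fin n) (x : Fin n → ℝ) :
    hA.eigenvectorBasis i ⬝ᵥ (A *ᵥ x) = hA.eigenvalues i * (hA.eigenvectorBasis i ⬝ᵥ x) := by
  rw [dotProduct_mulVec, ← mulVec_transpose, ← conjTranspose_eq_transpose_of_trivial, hA.eq,
    hA.mulVec_eigenvectorBasis, smul_dotProduct, smul_eq_mul]

theorem eigenvectorBasis_dotProduct_eq_zero_of_lambda2_lt (hA : A.IsHermitian) {v : Fin n → ℝ}
    {m : ℝ} (hv : v ≠ 0) (hAv : A *ᵥ v = m • v) (hm : lambda2 A < m) {y : Fin n → ℝ}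
    (hy : y ⬝ᵥ v = 0) {i : Fin n} (hi : lambda2 A < hA.eigenvalues i) :
    hA.eigenvectorBasis i ⬝ᵥ y = 0 := by
  set b := hA.eigenvectorBasis
  -- `v` only has components along eigenvalue `m > λ₂`, and at most one eigenvalue exceeds `λ₂`.
  have honly : ∀ j, b j ⬝ᵥ v ≠ 0 → j = i := by
    intro j hj
    have hμj : hA.eigenvalues j = m := by
      apply mul_right_cancel₀ hj
      rw [← hA.eigenvectorBasis_dotProduct_mulVec, hAv, dotProduct_smul, smul_eq_mul]
    exact card_le_one.mp hA.card_lambda2_lt_eigenvalues_le_one j (by simp [hμj, hm]) i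
      (by simpa using hi)
  have hsingle : ∀ x, ∑ j, (x ⬝ᵥ b j) * (b j ⬝ᵥ v) = (x ⬝ᵥ b i) * (b i ⬝ᵥ v) := fun x =>
    sum_eq_single i (fun j _ hji => by rw [not_not.mp (mt (honly j) hji), mul_zero]) (by simp)
  have hvi : b i ⬝ᵥ v ≠ 0 := by
    intro h
    apply hv
    rw [← dotProduct_self_eq_zero, ← b.sum_dotProduct_mul_dotProduct, hsingle, h, mul_zero]
  rw [← b.sum_dotProduct_mul_dotProduct, hsingle] at hy
  rw [dotProduct_comm]
  exact (mul_eq_zero.mp hy).resolve_right hvi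

theorem dotProduct_mulVec_le_lambda2_mul (hA : A.IsHermitian) {v : Fin n → ℝ} {m : ℝ}
    (hv : v ≠ 0) (hAv : A *ᵥ v = m • v) (hm : lambda2 A < m) {y : Fin n → ℝ}
    (hy : y ⬝ᵥ v = 0) : y ⬝ᵥ (A *ᵥ y) ≤ lambda2 A * (y ⬝ᵥ y) := by
  set b := hA.eigenvectorBasis
  rw [← b.sum_dotProduct_mul_dotProduct, ← b.sum_dotProduct_mul_dotProduct, mul_sum]
  refine sum_le_sum fun i _ => ?_
  rw [hA.eigenvectorBasis_dotProduct_mulVec, dotProduct_comm y]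
  rcases le_or_gt (hA.eigenvalues i) (lambda2 A) with hi | hi
  · nlinarith [mul_self_nonneg (b i ⬝ᵥ y)]
  · simp [b, hA.eigenvectorBasis_dotProduct_eq_zero_of_lambda2_lt hv hAv hm hy hi]

end Matrix.IsHermitian

theorem sum_smul_congr_of_pos {Ω M : Type*} [Fintype Ω] [AddCommMonoid M] [Module ℝ M]
    {p : Ω → ℝ} (hp : ∀ ω, 0 ≤ p ω) {f g : Ω → M} (hfg : ∀ ω, 0 < p ω → f ω = g ω) :
    ∑ ω, p ω • f ω = ∑ ω, p ω • g ω :=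
  sum_congr rfl fun ω _ => by
    rcases (hp ω).lt_or_eq with h | h
    · rw [hfg ω h]
    · rw [← h, zero_smul, zero_smul]

theorem sum_ite_le_sum_mul_div_sq_mul {ι : Type*} (s : Finset ι) {w q : ι → ℝ}
    (hw : ∀ i, 0 ≤ w i) (hq : ∀ i, 0 ≤ q i) {ε r : ℝ} (hε : 0 < ε) (hr : 0 < r) :
    ∑ i ∈ s, (if ε ≤ √(q i) / √r then w i else 0) ≤ (∑ i ∈ s, w i * q i) / (ε ^ 2 * r) := by
  rw [sum_div]
  refine sum_le_sum fun i _ => ?_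
  split_ifs with h
  · rw [← Real.sqrt_div' _ hr.le, Real.le_sqrt' hε, le_div_iff₀ hr] at h
    rw [le_div_iff₀ (by positivity)]
    exact mul_le_mul_of_nonneg_left h (hw i)
  · exact div_nonneg (mul_nonneg (hw i) (hq i)) (by positivity)

section Gossip

variable {n : ℕ} {Ω : Type*}

theorem sub_mean_smul_one_dotProduct_one (x : Fin n → ℝ) :
    (x - ((∑ i, x i) / n) • 1) ⬝ᵥ 1 = 0 := by
  rcases eq_or_ne n 0 with rfl | hn
  · simp
  · rw [sub_dotProduct, smul_dotProduct, dotProduct_one, one_dotProduct_one, Fintype.card_fin,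
      smul_eq_mul, div_mul_cancel₀ _ (Nat.cast_ne_zero.mpr hn), sub_self]

theorem dotProduct_sub_mean_smul_one_le (x : Fin n → ℝ) :
    (x - ((∑ i, x i) / n) • 1) ⬝ᵥ (x - ((∑ i, x i) / n) • 1) ≤ x ⬝ᵥ x := by
  set c := (∑ i, x i) / n
  have hy : (x - c • 1) ⬝ᵥ 1 = 0 := sub_mean_smul_one_dotProduct_one x
  have hx : x = (x - c • 1) + c • 1 := (sub_add_cancel x _).symm
  set y := x - c • 1
  have hpyth : x ⬝ᵥ x = y ⬝ᵥ y + c ^ 2 * n := by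
    conv_lhs => rw [hx]
    simp only [add_dotProduct, dotProduct_add, smul_dotProduct, dotProduct_smul,
      dotProduct_comm 1 y, hy, one_dotProduct_one, Fintype.card_fin, smul_eq_mul]
    ring
  rw [hpyth]
  have : 0 ≤ c ^ 2 * n := by positivity
  linarith

theorem IsIdempotentElem.mulVec_dotProduct_mulVec {P : Matrix (Fin n) (Fin n) ℝ}
    (hidem : IsIdempotentElem P) (hsymm : P.IsSymm) (x : Fin n → ℝ) :
    (P *ᵥ x) ⬝ᵥ (P *ᵥ x) = x ⬝ᵥ (P *ᵥ x) := by
  rw [dotProduct_mulVec, ← mulVec_transpose, hsymm.eq, mulVec_mulVec, hidem.eq, dotProduct_comm]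

theorem isSymm_sum_smul [Fintype Ω] {p : Ω → ℝ} (hp : ∀ ω, 0 ≤ p ω)
    {W : Ω → Matrix (Fin n) (Fin n) ℝ} (hsymm : ∀ ω, 0 < p ω → (W ω).IsSymm) :
    (∑ ω, p ω • W ω).IsSymm := by
  rw [IsSymm, transpose_sum]
  simp only [transpose_smul]
  exact sum_smul_congr_of_pos hp fun ω h => (hsymm ω h).eq

theorem sum_smul_mulVec_one [Fintype Ω] {p : Ω → ℝ} (hp : ∀ ω, 0 ≤ p ω) (hsum : ∑ ω, p ω = 1)
    {W : Ω → Matrix (Fin n) (Fin n) ℝ} (hfix : ∀ ω, 0 < p ω → W ω *ᵥ 1 = 1) :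
    (∑ ω, p ω • W ω) *ᵥ 1 = 1 := by
  rw [sum_mulVec]
  simp only [smul_mulVec]
  rw [sum_smul_congr_of_pos hp hfix, ← sum_smul, hsum, one_smul]

theorem sum_prod_mul_succ [Fintype Ω] (p : Ω → ℝ) (t : ℕ) (f : (Fin (t + 1) → Ω) → ℝ) :
    ∑ σ : Fin (t + 1) → Ω, (∏ k, p (σ k)) * f σ
      = ∑ σ : Fin t → Ω, (∏ k, p (σ k)) * ∑ ω, p ω * f (Fin.snoc σ ω) := by
  rw [← (Fin.snocEquiv fun _ => Ω).sum_comp, Fintype.sum_prod_type, sum_comm]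
  refine sum_congr rfl fun σ _ => ?_
  rw [mul_sum]
  refine sum_congr rfl fun ω _ => ?_
  simp only [Fin.snocEquiv_apply, Fin.prod_univ_castSucc, Fin.snoc_castSucc, Fin.snoc_last,
    mul_assoc]
  rfl

theorem traj_congr {W W' : Ω → Matrix (Fin n) (Fin n) ℝ} (x0 : Fin n → ℝ) :
    ∀ (t : ℕ) (σ : Fin t → Ω), (∀ k, W (σ k) = W' (σ k)) → traj W x0 t σ = traj W' x0 t σ
  | 0, _, _ => rfl
  | t + 1, σ, h => by
    rw [traj, traj, h, traj_congr x0 t _ fun k => h k.castSucc]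

theorem sum_prod_mul_traj_congr [Fintype Ω] {p : Ω → ℝ} (hp : ∀ ω, 0 ≤ p ω)
    {W W' : Ω → Matrix (Fin n) (Fin n) ℝ} (hWW' : ∀ ω, 0 < p ω → W ω = W' ω) (x0 : Fin n → ℝ)
    (t : ℕ) (F : (Fin n → ℝ) → ℝ) :
    ∑ σ : Fin t → Ω, (∏ k, p (σ k)) * F (traj W x0 t σ)
      = ∑ σ : Fin t → Ω, (∏ k, p (σ k)) * F (traj W' x0 t σ) := by
  refine sum_congr rfl fun σ _ => ?_
  by_cases hσ : ∀ k, 0 < p (σ k)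
  · rw [traj_congr x0 t σ fun k => hWW' _ (hσ k)]
  · obtain ⟨k, hk⟩ := not_forall.mp hσ
    rw [prod_eq_zero (mem_univ k) (le_antisymm (not_lt.mp hk) (hp _)), zero_mul, zero_mul]

variable {W : Ω → Matrix (Fin n) (Fin n) ℝ}

theorem traj_snoc (x0 : Fin n → ℝ) (t : ℕ) (σ : Fin t → Ω) (ω : Ω) :
    traj W x0 (t + 1) (Fin.snoc σ ω) = W ω *ᵥ traj W x0 t σ := by
  simp only [traj, Fin.snoc_last, Fin.snoc_castSucc]

theorem traj_sub_smul_one (hfix : ∀ ω, W ω *ᵥ 1 = 1) (x0 : Fin n → ℝ) (c : ℝ) :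
    ∀ (t : ℕ) (σ : Fin t → Ω), traj W x0 t σ - c • 1 = traj W (x0 - c • 1) t σ
  | 0, _ => rfl
  | t + 1, σ => by
    rw [traj, traj, ← traj_sub_smul_one hfix x0 c t, mulVec_sub, mulVec_smul, hfix]

theorem traj_dotProduct_one (hsymm : ∀ ω, (W ω).IsSymm) (hfix : ∀ ω, W ω *ᵥ 1 = 1)
    (x0 : Fin n → ℝ) : ∀ (t : ℕ) (σ : Fin t → Ω), traj W x0 t σ ⬝ᵥ 1 = x0 ⬝ᵥ 1
  | 0, _ => rfl
  | t + 1, σ => by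
    rw [traj, dotProduct_comm, dotProduct_mulVec, ← mulVec_transpose, (hsymm _).eq, hfix,
      dotProduct_comm, traj_dotProduct_one hsymm hfix x0 t]

variable [Fintype Ω] {p : Ω → ℝ}

theorem sum_prod_mul_traj_dotProduct_self_le (hp : ∀ ω, 0 ≤ p ω) (hsymm : ∀ ω, (W ω).IsSymm)
    (hidem : ∀ ω, IsIdempotentElem (W ω)) (hfix : ∀ ω, W ω *ᵥ 1 = 1) {lam : ℝ} (hlam : 0 ≤ lam)
    (hmean : ∀ y, y ⬝ᵥ 1 = 0 → y ⬝ᵥ ((∑ ω, p ω • W ω) *ᵥ y) ≤ lam * (y ⬝ᵥ y))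
    {u : Fin n → ℝ} (hu : u ⬝ᵥ 1 = 0) :
    ∀ t : ℕ, ∑ σ : Fin t → Ω, (∏ k, p (σ k)) * (traj W u t σ ⬝ᵥ traj W u t σ)
      ≤ lam ^ t * (u ⬝ᵥ u)
  | 0 => by simp [traj]
  | t + 1 => by
    have hstep : ∀ y, ∑ ω, p ω * ((W ω *ᵥ y) ⬝ᵥ (W ω *ᵥ y))
        = y ⬝ᵥ ((∑ ω, p ω • W ω) *ᵥ y) := by
      intro y
      simp only [(hidem _).mulVec_dotProduct_mulVec (hsymm _), sum_mulVec, dotProduct_sum,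
        smul_mulVec, dotProduct_smul, smul_eq_mul]
    calc ∑ σ : Fin (t + 1) → Ω, (∏ k, p (σ k)) * (traj W u (t + 1) σ ⬝ᵥ traj W u (t + 1) σ)
        = ∑ σ : Fin t → Ω, (∏ k, p (σ k)) *
            (traj W u t σ ⬝ᵥ ((∑ ω, p ω • W ω) *ᵥ traj W u t σ)) := by
          simp only [sum_prod_mul_succ, traj_snoc, hstep]
      _ ≤ ∑ σ : Fin t → Ω, lam * ((∏ k, p (σ k)) * (traj W u t σ ⬝ᵥ traj W u t σ)) := by
          refine sum_le_sum fun σ _ => ?_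
          rw [mul_left_comm]
          exact mul_le_mul_of_nonneg_left
            (hmean _ (by rw [traj_dotProduct_one hsymm hfix, hu]))
            (prod_nonneg fun k _ => hp _)
      _ ≤ lam * (lam ^ t * (u ⬝ᵥ u)) := by
          rw [← mul_sum]
          exact mul_le_mul_of_nonneg_left
            (sum_prod_mul_traj_dotProduct_self_le hp hsymm hidem hfix hlam hmean hu t) hlam
      _ = lam ^ (t + 1) * (u ⬝ᵥ u) := by ring

theorem sum_prod_mul_dotProduct_self_sub_mean_le (hp : ∀ ω, 0 ≤ p ω)
    (hW : ∀ ω, 0 < p ω → (W ω).IsSymm ∧ IsIdempotentElem (W ω) ∧ W ω *ᵥ 1 = 1)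
    {lam : ℝ} (hlam : 0 ≤ lam)
    (hmean : ∀ y, y ⬝ᵥ 1 = 0 → y ⬝ᵥ ((∑ ω, p ω • W ω) *ᵥ y) ≤ lam * (y ⬝ᵥ y))
    (x0 : Fin n → ℝ) (t : ℕ) :
    ∑ σ : Fin t → Ω, (∏ k, p (σ k)) * ((traj W x0 t σ - ((∑ i, x0 i) / n) • 1) ⬝ᵥ
      (traj W x0 t σ - ((∑ i, x0 i) / n) • 1)) ≤ lam ^ t * (x0 ⬝ᵥ x0) := by
  set c := (∑ i, x0 i) / n
  -- Off the support of `p` the matrices never matter; there, replace them by the identity.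
  set W' : Ω → Matrix (Fin n) (Fin n) ℝ := fun ω => if 0 < p ω then W ω else 1
  have hWW' : ∀ ω, 0 < p ω → W ω = W' ω := fun ω h => (if_pos h).symm
  have hW' : ∀ ω, (W' ω).IsSymm ∧ IsIdempotentElem (W' ω) ∧ W' ω *ᵥ 1 = 1 := fun ω => by
    by_cases h : 0 < p ω
    · simpa only [W', if_pos h] using hW ω h
    · simp only [W', if_neg h]
      exact ⟨isSymm_one, IsIdempotentElem.one, one_mulVec 1⟩
  rw [sum_prod_mul_traj_congr hp hWW' x0 t fun x => (x - c • 1) ⬝ᵥ (x - c • 1)]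
  simp only [traj_sub_smul_one fun ω => (hW' ω).2.2]
  calc _ ≤ lam ^ t * ((x0 - c • 1) ⬝ᵥ (x0 - c • 1)) :=
        sum_prod_mul_traj_dotProduct_self_le hp (fun ω => (hW' ω).1) (fun ω => (hW' ω).2.1)
          (fun ω => (hW' ω).2.2) hlam (sum_smul_congr_of_pos hp hWW' ▸ hmean)
          (sub_mean_smul_one_dotProduct_one x0) t
    _ ≤ lam ^ t * (x0 ⬝ᵥ x0) := by
        gcongr
        exact dotProduct_sub_mean_smul_one_le x0

end Gossip

theorem pow_le_pow_of_mul_log_inv_div_le {lam ε : ℝ} (hlam0 : 0 < lam) (hlam1 : lam < 1)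
    (hε : 0 < ε) {k t : ℕ} (ht : k * Real.log (1 / ε) / Real.log (1 / lam) ≤ t) :
    lam ^ t ≤ ε ^ k := by
  have hlog : 0 < Real.log (1 / lam) :=
    Real.log_pos (by rw [one_div]; exact one_lt_inv_iff₀.mpr ⟨hlam0, hlam1⟩)
  rw [div_le_iff₀ hlog, one_div, one_div, Real.log_inv, Real.log_inv] at ht
  rw [← Real.log_le_log_iff (by positivity) (by positivity), Real.log_pow, Real.log_pow]
  linarith

theorem div_log_inv_le_div_one_sub {lam a : ℝ} (hlam0 : 0 < lam) (hlam1 : lam < 1)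
    (ha : 0 ≤ a) : a / Real.log (1 / lam) ≤ a / (1 - lam) := by
  refine div_le_div_of_nonneg_left ha (by linarith) ?_
  rw [one_div, Real.log_inv]
  linarith [Real.log_le_sub_one_of_pos hlam0]

/-- Averaging-time theorem.  Let `(W(t))` be i.i.d. random matrices taking finitely
many values (common law `p`), each almost surely a set-averaging matrix for some
nonempty set, let `x(t+1) = W(t) x(t)` from a deterministic `x(0) ≠ 0`, and let
`λ := λ₂(E[W(0)])` with `0 < λ < 1`.  Then for every `ε ∈ (0,1)`, whenever
`t ≥ 3 log(1/ε) / log(1/λ)` we have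
`P(‖x(t) − x_ave·1‖ / ‖x(0)‖ ≥ ε) ≤ ε`; moreover
`3 log(1/ε)/log(1/λ) ≤ 3 log(1/ε)/(1 − λ)`, so the same conclusion holds whenever
`t ≥ 3 log(1/ε)/(1 − λ)`. -/
theorem averaging_time_bound {n : ℕ} {Ω : Type*} [Fintype Ω]
    (p : Ω → ℝ) (hp : ∀ ω, 0 ≤ p ω) (hsum : ∑ ω, p ω = 1)
    (W : Ω → Matrix (Fin n) (Fin n) ℝ)
    (hW : ∀ ω, 0 < p ω → ∃ S : Finset (Fin n), S.Nonempty ∧ W ω = setAveragingMatrix S)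
    (hlam0 : 0 < lambda2 (∑ ω, p ω • W ω))
    (hlam1 : lambda2 (∑ ω, p ω • W ω) < 1) :
    (∀ ε : ℝ, 0 < ε → ε < 1 → ∀ x0 : Fin n → ℝ, x0 ≠ 0 → ∀ t : ℕ,
      3 * Real.log (1 / ε) / Real.log (1 / lambda2 (∑ ω, p ω • W ω)) ≤ t →
      ∑ σ : Fin t → Ω,
        (if ε ≤ Real.sqrt ((traj W x0 t σ - ((∑ i, x0 i) / n) • fun _ => (1 : ℝ)) ⬝ᵥ
                  (traj W x0 t σ - ((∑ i, x0 i) / n) • fun _ => (1 : ℝ))) /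
                Real.sqrt (x0 ⬝ᵥ x0)
          then ∏ k, p (σ k) else 0) ≤ ε) ∧
    (∀ ε : ℝ, 0 < ε → ε < 1 →
      3 * Real.log (1 / ε) / Real.log (1 / lambda2 (∑ ω, p ω • W ω))
        ≤ 3 * Real.log (1 / ε) / (1 - lambda2 (∑ ω, p ω • W ω))) := by
  set A := ∑ ω, p ω • W ω
  have hW' : ∀ ω, 0 < p ω → (W ω).IsSymm ∧ IsIdempotentElem (W ω) ∧ W ω *ᵥ 1 = 1 := by
    intro ω h
    obtain ⟨S, hS, hWS⟩ := hW ω h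
    rw [hWS]
    exact ⟨isSymm_setAveragingMatrix S, isIdempotentElem_setAveragingMatrix hS,
      setAveragingMatrix_mulVec_one hS⟩
  have hA : A.IsHermitian := isHermitian_iff_isSymm.mpr (isSymm_sum_smul hp fun ω h => (hW' ω h).1)
  have hA1 : A *ᵥ 1 = 1 := sum_smul_mulVec_one hp hsum fun ω h => (hW' ω h).2.2
  refine ⟨fun ε hε0 hε1 x0 hx0 t ht => ?_, fun ε hε0 hε1 =>
    div_log_inv_le_div_one_sub hlam0 hlam1
      (mul_nonneg zero_le_three (Real.log_nonneg (one_le_one_div hε0 hε1.le)))⟩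
  obtain ⟨i, -⟩ := Function.ne_iff.mp hx0
  have hmean : ∀ y, y ⬝ᵥ 1 = 0 → y ⬝ᵥ (A *ᵥ y) ≤ lambda2 A * (y ⬝ᵥ y) := fun y hy =>
    hA.dotProduct_mulVec_le_lambda2_mul (Function.ne_iff.mpr ⟨i, one_ne_zero⟩)
      (by rw [hA1, one_smul]) hlam1 hy
  have hsq : ∀ v : Fin n → ℝ, 0 ≤ v ⬝ᵥ v := fun v => by simpa using dotProduct_star_self_nonneg v
  have hr : 0 < x0 ⬝ᵥ x0 := (hsq x0).lt_of_ne' (dotProduct_self_eq_zero.not.mpr hx0)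
  calc _ ≤ (∑ σ : Fin t → Ω, (∏ k, p (σ k)) *
          ((traj W x0 t σ - ((∑ i, x0 i) / n) • 1) ⬝ᵥ (traj W x0 t σ - ((∑ i, x0 i) / n) • 1)))
          / (ε ^ 2 * (x0 ⬝ᵥ x0)) :=
        sum_ite_le_sum_mul_div_sq_mul _ (fun σ => prod_nonneg fun k _ => hp _) (fun σ => hsq _)
          hε0 hr
    _ ≤ lambda2 A ^ t * (x0 ⬝ᵥ x0) / (ε ^ 2 * (x0 ⬝ᵥ x0)) := by
        gcongr
        exact sum_prod_mul_dotProduct_self_sub_mean_le hp hW' hlam0.le hmean x0 t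
    _ ≤ ε ^ 3 * (x0 ⬝ᵥ x0) / (ε ^ 2 * (x0 ⬝ᵥ x0)) := by
        gcongr
        exact pow_le_pow_of_mul_log_inv_div_le hlam0 hlam1 hε0 (mod_cast ht)
    _ = ε := by field_simp
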